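/- Let σ, ρ be gauges. The constant net a_{n,ε} = 1 is σ,ρ-moderate over hypersums (i.e. for every net of naturals (N_ε) with (N_ε) σ-moderate, the net (Σ_{n=0}^{N_ε} 1) = (N_ε + 1) is ρ-moderate) if and only if σ ≥ ρ*, i.e. ∃ Q ∈ ℕ with σ_ε ≥ ρ_ε^Q for ε sufficiently small. -/

import Mathlib

open Filter Finset

def IsGauge (ρ : ℝ → ℝ) : Prop :=
  (∀ ε : ℝ, 0 < ε → ε ≤ 1 → 0 < ρ ε ∧ ρ ε ≤ 1) ∧
    Tendsto ρ (nhdsWithin 0 (Set.Ioi 0)) (nhds 0)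

def EvSmall (P : ℝ → Prop) : Prop := ∃ ε₀ : ℝ, 0 < ε₀ ∧ ∀ ε : ℝ, 0 < ε → ε ≤ ε₀ → P ε

def Moderate (ρ : ℝ → ℝ) (x : ℝ → ℝ) : Prop :=
  ∃ N : ℕ, EvSmall (fun ε => |x ε| ≤ ρ ε ^ (-(N : ℤ)))

/-- A net of naturals is `σ`-moderate. -/
def ModerateNat (σ : ℝ → ℝ) (N : ℝ → ℕ) : Prop :=
  ∃ R : ℕ, EvSmall (fun ε => (N ε : ℝ) ≤ σ ε ^ (-(R : ℤ)))

/-!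
Since `∑_{n ≤ N_ε} 1 = N_ε + 1`, the condition says that every `σ`-moderate net of naturals is
`ρ`-moderate. If `ρ^Q ≤ σ ≤ 1/2`, then `N_ε + 1 ≤ σ_ε^{-R} + 1 ≤ σ_ε^{-(R+1)} ≤ ρ_ε^{-Q(R+1)}`.
Conversely, the `σ`-moderate net `N_ε = ⌊σ_ε⁻¹⌋` satisfies `σ_ε⁻¹ < N_ε + 1 ≤ ρ_ε^{-M}` for some
`M`, that is `ρ_ε^M < σ_ε`.
-/

open scoped Topology

theorem evSmall_iff_eventually {P : ℝ → Prop} : EvSmall P ↔ ∀ᶠ ε in 𝓝[>] (0 : ℝ), P ε := by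
  rw [eventually_iff, mem_nhdsGT_iff_exists_Ioc_subset]
  exact ⟨fun ⟨ε₀, hε₀, hP⟩ => ⟨ε₀, hε₀, fun ε hε => hP ε hε.1 hε.2⟩,
    fun ⟨ε₀, hε₀, hP⟩ => ⟨ε₀, hε₀, fun ε hε hεε₀ => hP ⟨hε, hεε₀⟩⟩⟩

theorem moderate_iff {ρ x : ℝ → ℝ} :
    Moderate ρ x ↔ ∃ N : ℕ, ∀ᶠ ε in 𝓝[>] (0 : ℝ), |x ε| ≤ (ρ ε ^ N)⁻¹ := by
  simp only [Moderate, evSmall_iff_eventually, zpow_neg, zpow_natCast]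

theorem moderateNat_iff {σ : ℝ → ℝ} {N : ℝ → ℕ} :
    ModerateNat σ N ↔ ∃ R : ℕ, ∀ᶠ ε in 𝓝[>] (0 : ℝ), (N ε : ℝ) ≤ (σ ε ^ R)⁻¹ := by
  simp only [ModerateNat, evSmall_iff_eventually, zpow_neg, zpow_natCast]

namespace IsGauge

variable {ρ : ℝ → ℝ}

theorem eventually_pos (hρ : IsGauge ρ) : ∀ᶠ ε in 𝓝[>] (0 : ℝ), 0 < ρ ε :=
  evSmall_iff_eventually.1 ⟨1, one_pos, fun ε hε hε1 => (hρ.1 ε hε hε1).1⟩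

theorem eventually_le (hρ : IsGauge ρ) {c : ℝ} (hc : 0 < c) :
    ∀ᶠ ε in 𝓝[>] (0 : ℝ), ρ ε ≤ c :=
  (hρ.2.eventually (gt_mem_nhds hc)).mono fun _ h => h.le

theorem moderateNat_floor_inv (hρ : IsGauge ρ) : ModerateNat ρ (fun ε => ⌊(ρ ε)⁻¹⌋₊) :=
  moderateNat_iff.2 ⟨1, hρ.eventually_pos.mono fun ε hε => by
    simpa using Nat.floor_le (inv_nonneg.2 hε.le)⟩

end IsGauge

theorem add_one_le_inv_pow_succ {s x : ℝ} {R : ℕ} (hs : 0 < s) (hs_half : s ≤ 1 / 2)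
    (hx : x ≤ (s ^ R)⁻¹) : x + 1 ≤ (s ^ (R + 1))⁻¹ := by
  have hR : 1 ≤ (s ^ R)⁻¹ := one_le_inv₀ (by positivity) |>.2 (pow_le_one₀ hs.le (by linarith))
  have h2 : 2 ≤ s⁻¹ := by rw [le_inv_comm₀ two_pos hs]; linarith
  calc x + 1 ≤ (s ^ R)⁻¹ * 2 := by linarith
    _ ≤ (s ^ R)⁻¹ * s⁻¹ := by gcongr
    _ = (s ^ (R + 1))⁻¹ := by rw [pow_succ, mul_inv]

theorem moderate_natCast_add_one_of_pow_le {σ ρ : ℝ → ℝ} {N : ℝ → ℕ} {Q : ℕ}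
    (hσ : IsGauge σ) (hρ : IsGauge ρ) (hQ : ∀ᶠ ε in 𝓝[>] (0 : ℝ), ρ ε ^ Q ≤ σ ε)
    (hN : ModerateNat σ N) : Moderate ρ (fun ε => (N ε : ℝ) + 1) := by
  obtain ⟨R, hR⟩ := moderateNat_iff.1 hN
  refine moderate_iff.2 ⟨Q * (R + 1), ?_⟩
  filter_upwards [hR, hQ, hσ.eventually_pos, hσ.eventually_le one_half_pos, hρ.eventually_pos]
    with ε hNε hQε hσε hσε_half hρε
  calc |(N ε : ℝ) + 1| = N ε + 1 := abs_of_nonneg (by positivity)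
    _ ≤ (σ ε ^ (R + 1))⁻¹ := add_one_le_inv_pow_succ hσε hσε_half hNε
    _ ≤ ((ρ ε ^ Q) ^ (R + 1))⁻¹ := by gcongr
    _ = (ρ ε ^ (Q * (R + 1)))⁻¹ := by rw [pow_mul]

theorem one_moderate_over_hypersums_iff_geStar (σ ρ : ℝ → ℝ)
    (hσ : IsGauge σ) (hρ : IsGauge ρ) :
    (∀ N : ℝ → ℕ, ModerateNat σ N →
        Moderate ρ (fun ε => ∑ n ∈ Finset.range (N ε + 1), (1 : ℝ))) ↔
      ∃ Q : ℕ, EvSmall (fun ε => σ ε ≥ ρ ε ^ Q) := by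
  simp only [sum_const, card_range, nsmul_eq_mul, mul_one, Nat.cast_add, Nat.cast_one,
    evSmall_iff_eventually]
  constructor
  · intro H
    obtain ⟨M, hM⟩ := moderate_iff.1 (H _ hσ.moderateNat_floor_inv)
    refine ⟨M, ?_⟩
    filter_upwards [hM, hσ.eventually_pos, hρ.eventually_pos] with ε hMε hσε hρε
    have h_inv_lt : (σ ε)⁻¹ < (ρ ε ^ M)⁻¹ :=
      (Nat.lt_floor_add_one _).trans_le ((le_abs_self _).trans hMε)
    exact ((inv_lt_inv₀ hσε (pow_pos hρε M)).1 h_inv_lt).le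
  · rintro ⟨Q, hQ⟩ N hN
    exact moderate_natCast_add_one_of_pow_le hσ hρ hQ hN
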